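/- arXiv:1710.04893 — 5 statements merged into one kernel-verified Lean document; each statement's English description precedes it below -/
import Mathlib

section
/- Let A be a bounded linear operator on a complex Hilbert space H with polar decomposition A = U|A|, and let f, g be non-negative continuous functions on [0,∞) with f(x)g(x) = x for all x ≥ 0. Then the numerical radius satisfies w(A) ≤ (1/4)‖g²(|A|) + f²(|A|)‖ + (1/2)w(f(|A|)·U·g(|A|)). -/
/-!
Write `A = X* Y` with `X = g(|A|) U*` and `Y = f(|A|)`. For a unit vector `x` pick a unimodular
`c` with `c ⟪Y x, X x⟫ = |⟪A x, x⟫|`; then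
`4 |⟪A x, x⟫| ≤ ‖(Y + c X) x‖² ≤ ‖(Y + c X)(Y + c X)*‖ ≤ ‖X X* + Y Y*‖ + ‖W + W*‖`
with `W = c̄ Y X*`, and `‖W + W*‖ ≤ 2 w(W) = 2 w(f(|A|) U g(|A|))`. Finally
`X X* = g(|A|) U*U g(|A|) ≤ g²(|A|)` because the partial isometry `U` is a contraction.
-/

noncomputable section
open ContinuousLinearMap

variable {H : Type*} [NormedAddCommGroup H] [InnerProductSpace ℂ H] [CompleteSpace H]

/-- The numerical radius of a bounded operator. -/
def nrad (A : H →L[ℂ] H) : ℝ :=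
  sSup {r : ℝ | ∃ x : H, ‖x‖ = 1 ∧ r = ‖(inner ℂ (A x) x : ℂ)‖}

/-- The absolute value |A| = (A*A)^(1/2) via continuous functional calculus. -/
def oabs (A : H →L[ℂ] H) : H →L[ℂ] H := cfc Real.sqrt (adjoint A * A)

/-- The 2×2 block operator matrix [[A,B],[C,D]] on the Hilbert space H ⊕ H. -/
def blk (A B C D : H →L[ℂ] H) : WithLp 2 (H × H) →L[ℂ] WithLp 2 (H × H) :=
  ((WithLp.prodContinuousLinearEquiv 2 ℂ H H).symm.toContinuousLinearMap).comp
    ((((A.comp (fst ℂ H H)) + B.comp (snd ℂ H H)).prod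
      ((C.comp (fst ℂ H H)) + D.comp (snd ℂ H H))).comp
      (WithLp.prodContinuousLinearEquiv 2 ℂ H H).toContinuousLinearMap)

theorem ContinuousLinearMap.norm_le_one_of_norm_map_orthogonal_ker {𝕜 E F : Type*} [RCLike 𝕜]
    [NormedAddCommGroup E] [InnerProductSpace 𝕜 E] [CompleteSpace E]
    [NormedAddCommGroup F] [InnerProductSpace 𝕜 F] (U : E →L[𝕜] F)
    (hU : ∀ x ∈ (LinearMap.ker (U : E →ₗ[𝕜] F))ᗮ, ‖U x‖ = ‖x‖) : ‖U‖ ≤ 1 := by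
  set K := LinearMap.ker (U : E →ₗ[𝕜] F)
  have : CompleteSpace K := (U.isClosed_ker).completeSpace_coe
  refine U.opNorm_le_bound zero_le_one fun x ↦ ?_
  obtain ⟨y, hy, z, hz, rfl⟩ := K.exists_add_mem_mem_orthogonal x
  have hyz := norm_add_sq_eq_norm_sq_add_norm_sq_of_inner_eq_zero y z
    (Submodule.inner_right_of_mem_orthogonal hy hz)
  have hUy : U y = 0 := hy
  rw [one_mul, map_add, hUy, zero_add, hU z hz]
  nlinarith [norm_nonneg y, norm_nonneg z, norm_nonneg (y + z)]

section NumericalRadius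

variable {E : Type*} [NormedAddCommGroup E] [InnerProductSpace ℂ E] (B : E →L[ℂ] E)

lemma norm_inner_le_nrad {x : E} (hx : ‖x‖ = 1) : ‖(inner ℂ (B x) x : ℂ)‖ ≤ nrad B := by
  refine le_csSup ⟨‖B‖, ?_⟩ ⟨x, hx, rfl⟩
  rintro r ⟨y, hy, rfl⟩
  simpa [hy] using (norm_inner_le_norm (𝕜 := ℂ) (B y) y).trans
    (mul_le_mul_of_nonneg_right (B.le_opNorm y) (norm_nonneg y))

lemma nrad_nonneg : 0 ≤ nrad B := by
  by_cases h : ∃ x : E, ‖x‖ = 1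
  · obtain ⟨x, hx⟩ := h
    exact (norm_nonneg _).trans (norm_inner_le_nrad B hx)
  · push Not at h
    have : {r : ℝ | ∃ x : E, ‖x‖ = 1 ∧ r = ‖(inner ℂ (B x) x : ℂ)‖} = ∅ := by
      ext r; simp [h]
    rw [nrad, this, Real.sSup_empty]

lemma nrad_le {c : ℝ} (hc : 0 ≤ c) (h : ∀ x : E, ‖x‖ = 1 → ‖(inner ℂ (B x) x : ℂ)‖ ≤ c) :
    nrad B ≤ c :=
  Real.sSup_le (by rintro r ⟨x, hx, rfl⟩; exact h x hx) hc

lemma nrad_smul_of_norm_eq_one {u : ℂ} (hu : ‖u‖ = 1) : nrad (u • B) = nrad B := by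
  simp [nrad, hu]

lemma abs_rayleighQuotient_le_nrad (x : E) : |B.rayleighQuotient x| ≤ nrad B := by
  rcases eq_or_ne x 0 with rfl | hx
  · simpa using nrad_nonneg B
  have hx' : ‖x‖ ≠ 0 := norm_ne_zero_iff.mpr hx
  set y := ((‖x‖⁻¹ : ℝ) : ℂ) • x
  have hy : ‖y‖ = 1 := by simp [y, norm_smul, hx']
  have hxy : B.rayleighQuotient x = B.rayleighQuotient y :=
    (B.rayleigh_smul x (by simpa using hx')).symm
  rw [hxy, rayleighQuotient, hy, one_pow, div_one, reApplyInnerSelf_apply]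
  exact (RCLike.abs_re_le_norm _).trans (norm_inner_le_nrad B hy)

lemma norm_add_star_le_two_mul_nrad [CompleteSpace E] : ‖B + star B‖ ≤ 2 * nrad B := by
  have hsym : ((B + star B : E →L[ℂ] E) : E →ₗ[ℂ] E).IsSymmetric :=
    (IsSelfAdjoint.add_star_self B).isSymmetric
  rw [norm_eq_iSup_rayleighQuotient _ hsym]
  refine ciSup_le fun x ↦ ?_
  have hstar : (star B).rayleighQuotient x = B.rayleighQuotient x := by
    rw [rayleighQuotient, rayleighQuotient, reApplyInnerSelf_apply, reApplyInnerSelf_apply,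
      star_eq_adjoint, adjoint_inner_left, ← inner_conj_symm x (B x), RCLike.conj_re]
  rw [rayleighQuotient_add, hstar, ← two_mul, abs_mul, abs_two]
  gcongr
  exact abs_rayleighQuotient_le_nrad B x

theorem nrad_star_mul_le [CompleteSpace E] (X Y : E →L[ℂ] E) :
    nrad (star X * Y) ≤ 1 / 4 * ‖X * star X + Y * star Y‖ + 1 / 2 * nrad (Y * star X) := by
  have hw := nrad_nonneg (Y * star X)
  refine nrad_le _ (by positivity) fun x hx ↦ ?_
  set z : ℂ := inner ℂ ((star X * Y) x) x
  set c : ℂ := Complex.exp (↑(-Complex.arg z) * Complex.I)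
  have hc : ‖c‖ = 1 := Complex.norm_exp_ofReal_mul_I _
  set X' := c • X
  set W := Y * star X'
  have hz : ‖z‖ = RCLike.re (inner ℂ (Y x) (X' x)) := by
    have hcz : c * z = ‖z‖ := by
      conv_lhs => rw [← Complex.norm_mul_exp_arg_mul_I z]
      rw [mul_left_comm, ← Complex.exp_add]
      simp
    have hYX : inner ℂ (Y x) (X x) = z := by
      rw [← adjoint_inner_left, ← star_eq_adjoint]; rfl
    simp [X', hYX, hcz]
  have hX' : X' * star X' = X * star X := by
    rw [star_smul, smul_mul_smul_comm, RCLike.star_def, RCLike.mul_conj, hc]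
    simp
  have hexpand : (Y + X') * star (Y + X') = (X * star X + Y * star Y) + (W + star W) := by
    rw [← hX', star_add, star_mul, star_star]
    noncomm_ring
  have hvec : 4 * ‖z‖ ≤ ‖(Y + X') x‖ ^ 2 := by
    rw [hz, add_apply, re_inner_eq_norm_add_mul_self_sub_norm_sub_mul_self_div_four]
    nlinarith [mul_self_nonneg ‖Y x - X' x‖]
  have hop : ‖(Y + X') x‖ ^ 2 ≤ ‖(Y + X') * star (Y + X')‖ := by
    rw [CStarRing.norm_self_mul_star, ← sq]
    gcongr
    simpa [hx] using (Y + X').le_opNorm x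
  have hW : ‖W + star W‖ ≤ 2 * nrad (Y * star X) := by
    have hW' : W = star c • (Y * star X) := by simp only [W, X', star_smul, mul_smul_comm]
    rw [← nrad_smul_of_norm_eq_one (Y * star X) (by rwa [norm_star]), ← hW']
    exact norm_add_star_le_two_mul_nrad W
  have := norm_add_le (X * star X + Y * star Y) (W + star W)
  rw [← hexpand] at this
  linarith

end NumericalRadius

section CStarAlgebra

variable {𝒜 : Type*} [CStarAlgebra 𝒜] [PartialOrder 𝒜] [StarOrderedRing 𝒜]

lemma cfc_mul_cfc_eq_self {a : 𝒜} (ha : 0 ≤ a) {f g : ℝ → ℝ} (hf : Continuous f)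
    (hg : Continuous g) (hfg : ∀ x, 0 ≤ x → f x * g x = x) : cfc f a * cfc g a = a := by
  rw [← cfc_mul f g a, cfc_congr (g := id), cfc_id ℝ a]
  exact fun x hx ↦ hfg x (spectrum_nonneg_of_nonneg ha hx)

lemma norm_mul_star_add_le_of_norm_le_one {u : 𝒜} (hu : ‖u‖ ≤ 1) (b : 𝒜) {c : 𝒜}
    (hc : 0 ≤ c) : ‖b * star u * star (b * star u) + c‖ ≤ ‖b * star b + c‖ := by
  have hu' : star u * u ≤ 1 := by
    rw [← CStarAlgebra.norm_le_one_iff_of_nonneg _ (star_mul_self_nonneg u),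
      CStarRing.norm_star_mul_self]
    exact mul_le_one₀ hu (norm_nonneg u) hu
  have hconj : b * star u * star (b * star u) ≤ b * star b := by
    simpa [mul_assoc] using star_right_conjugate_le_conjugate hu' b
  exact CStarAlgebra.norm_le_norm_of_nonneg_of_le (add_nonneg (mul_star_self_nonneg _) hc)
    (add_le_add_left hconj c)

end CStarAlgebra

theorem stmt_0_general (A U : H →L[ℂ] H)
    (hU : A = U * oabs A)
    (hiso : ∀ x ∈ (LinearMap.ker (U : H →ₗ[ℂ] H))ᗮ, ‖U x‖ = ‖x‖)
    (f g : ℝ → ℝ) (hf : Continuous f) (hg : Continuous g)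
    (hfg : ∀ x, 0 ≤ x → f x * g x = x) :
    nrad A ≤ (1 / 4) * ‖cfc (fun x => g x ^ 2) (oabs A) + cfc (fun x => f x ^ 2) (oabs A)‖
      + (1 / 2) * nrad (cfc f (oabs A) * U * cfc g (oabs A)) := by
  set F := cfc f (oabs A)
  set G := cfc g (oabs A)
  have hT : 0 ≤ oabs A := cfc_nonneg fun x _ ↦ Real.sqrt_nonneg x
  have hG : IsSelfAdjoint G := cfc_predicate g _
  have hF : IsSelfAdjoint F := cfc_predicate f _
  have hGF : G * F = oabs A := cfc_mul_cfc_eq_self hT hg hf fun x hx ↦ by rw [mul_comm, hfg x hx]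
  have hG2 : cfc (fun x => g x ^ 2) (oabs A) = G * star G := by
    rw [cfc_pow g 2 _ hg.continuousOn hT.isSelfAdjoint, hG.star_eq, sq]
  have hF2 : cfc (fun x => f x ^ 2) (oabs A) = F * star F := by
    rw [cfc_pow f 2 _ hf.continuousOn hT.isSelfAdjoint, hF.star_eq, sq]
  have hXY : star (G * star U) = U * G := by rw [star_mul, star_star, hG.star_eq]
  have hYX : F * star (G * star U) = F * U * G := by rw [hXY, mul_assoc]
  calc nrad A = nrad (star (G * star U) * F) := by rw [hXY, mul_assoc, hGF, ← hU]
    _ ≤ 1 / 4 * ‖G * star U * star (G * star U) + F * star F‖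
          + 1 / 2 * nrad (F * star (G * star U)) := nrad_star_mul_le _ _
    _ ≤ 1 / 4 * ‖G * star G + F * star F‖ + 1 / 2 * nrad (F * U * G) := by
      rw [hYX]
      gcongr
      exact norm_mul_star_add_le_of_norm_le_one (U.norm_le_one_of_norm_map_orthogonal_ker hiso) G
        (mul_star_self_nonneg F)
    _ = _ := by rw [hG2, hF2]

theorem stmt_0 (A U : H →L[ℂ] H)
    (hU : A = U * oabs A)
    (hker : LinearMap.ker (U : H →ₗ[ℂ] H) = (LinearMap.range (oabs A : H →ₗ[ℂ] H))ᗮ)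
    (hiso : ∀ x ∈ (LinearMap.ker (U : H →ₗ[ℂ] H))ᗮ, ‖U x‖ = ‖x‖)
    (f g : ℝ → ℝ) (hf : Continuous f) (hg : Continuous g)
    (hf0 : ∀ x, 0 ≤ x → 0 ≤ f x) (hg0 : ∀ x, 0 ≤ x → 0 ≤ g x)
    (hfg : ∀ x, 0 ≤ x → f x * g x = x) :
    nrad A ≤ (1 / 4) * ‖cfc (fun x => g x ^ 2) (oabs A) + cfc (fun x => f x ^ 2) (oabs A)‖
      + (1 / 2) * nrad (cfc f (oabs A) * U * cfc g (oabs A)) :=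
  stmt_0_general A U hU hiso f g hf hg hfg
end
end

section
/- Let A be a bounded linear operator on a complex Hilbert space with polar decomposition A = U|A|, and let t ∈ [0,1], r ≥ 1. Then w(A)^r ≤ (1/4)‖ |A|^{2tr} + |A|^{2(1−t)r} ‖ + (1/2) w(|A|^t U |A|^{1−t})^r. -/
noncomputable section
open ContinuousLinearMap

variable {H : Type*} [NormedAddCommGroup H] [InnerProductSpace ℂ H] [CompleteSpace H]

/-
Write `K = |A|^t`, `Q = |A|^(1-t)` and `L = U Q`, so that `A = L K` and the Aluthge transform is
`K L`. For a unit vector `x`, `⟨A x, x⟩ = ⟨K x, L* x⟩`, and for a suitable unimodular `w` this gives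
`4 |⟨A x, x⟩| ≤ ‖(w̄ L + K)* x‖² ≤ ‖w̄ L + K‖²`. Expanding `‖(w̄ L + K) y‖²`, self-adjointness of `K`
turns the cross term into `⟨K L y, y⟩`, and `U` is a contraction, so
`‖w̄ L + K‖² ≤ ‖|A|^(2t) + |A|^(2(1-t))‖ + 2 w(K L)`. Convexity of `s ↦ s^r`, used once for this
mean and once on the spectrum of `|A|`, then gives the `r`-th power inequality.
-/

open scoped InnerProductSpace

lemma rpow_add_div_two_le {p q r : ℝ} (hp : 0 ≤ p) (hq : 0 ≤ q) (hr : 1 ≤ r) :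
    ((p + q) / 2) ^ r ≤ (p ^ r + q ^ r) / 2 := by
  have h := (convexOn_rpow hr).2 (Set.mem_Ici.mpr hp) (Set.mem_Ici.mpr hq)
    (by norm_num : (0 : ℝ) ≤ 2⁻¹) (by norm_num : (0 : ℝ) ≤ 2⁻¹) (by norm_num)
  simp only [smul_eq_mul] at h
  calc ((p + q) / 2) ^ r = (2⁻¹ * p + 2⁻¹ * q) ^ r := by ring_nf
    _ ≤ 2⁻¹ * p ^ r + 2⁻¹ * q ^ r := h
    _ = (p ^ r + q ^ r) / 2 := by ring

section InnerProductSpace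

variable {𝕜 E F : Type*} [RCLike 𝕜] [NormedAddCommGroup E] [InnerProductSpace 𝕜 E]
  [NormedAddCommGroup F] [InnerProductSpace 𝕜 F]

lemma exists_norm_eq_one_four_mul_norm_inner_le (u v : E) :
    ∃ w : 𝕜, ‖w‖ = 1 ∧ 4 * ‖⟪u, v⟫_𝕜‖ ≤ ‖w • u + v‖ ^ 2 := by
  obtain ⟨w, hw, hwuv⟩ := RCLike.exists_norm_eq_mul_self (⟪u, v⟫_𝕜)
  refine ⟨starRingEnd 𝕜 w, by rw [RCLike.norm_conj, hw], ?_⟩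
  have hcross : RCLike.re ⟪starRingEnd 𝕜 w • u, v⟫_𝕜 = ‖⟪u, v⟫_𝕜‖ := by
    rw [inner_smul_left, RCLike.conj_conj, ← hwuv, RCLike.ofReal_re]
  have hcs : 2 * ‖⟪u, v⟫_𝕜‖ ≤ ‖u‖ ^ 2 + ‖v‖ ^ 2 := by
    nlinarith [norm_inner_le_norm (𝕜 := 𝕜) u v, sq_nonneg (‖u‖ - ‖v‖)]
  rw [norm_add_sq (𝕜 := 𝕜), hcross, norm_smul, RCLike.norm_conj, hw, one_mul]
  linarith

lemma norm_apply_le_of_isometric_on_ker_orthogonal [CompleteSpace E] {U : E →L[𝕜] F}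
    (hU : ∀ x ∈ (LinearMap.ker (U : E →ₗ[𝕜] F))ᗮ, ‖U x‖ = ‖x‖) (y : E) : ‖U y‖ ≤ ‖y‖ := by
  set N := LinearMap.ker (U : E →ₗ[𝕜] F)
  have : CompleteSpace N := U.isClosed_ker.completeSpace_coe
  have hUy : U y = U (Nᗮ.starProjection y) := by
    have hN : U (N.starProjection y) = 0 := N.starProjection_apply_mem y
    rw [Submodule.starProjection_orthogonal_val, map_sub, hN, sub_zero]
  rw [hUy, hU _ (Nᗮ.starProjection_apply_mem y)]
  exact Nᗮ.norm_starProjection_apply_le y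

lemma sq_opNorm_le_of_forall {T : E →L[𝕜] F} {C : ℝ} (hC : 0 ≤ C)
    (h : ∀ y, ‖T y‖ ^ 2 ≤ C * ‖y‖ ^ 2) : ‖T‖ ^ 2 ≤ C := by
  have hT : ‖T‖ ≤ √C := T.opNorm_le_bound (Real.sqrt_nonneg C) fun y ↦ by
    rw [← Real.sqrt_sq (norm_nonneg y), ← Real.sqrt_mul hC]
    exact Real.le_sqrt_of_sq_le (h y)
  simpa [Real.sq_sqrt hC] using pow_le_pow_left₀ (norm_nonneg T) hT 2

variable [CompleteSpace E]

lemma norm_sq_add_norm_sq_le {S T : E →L[𝕜] E} (hS : IsSelfAdjoint S) (hT : IsSelfAdjoint T)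
    (y : E) : ‖S y‖ ^ 2 + ‖T y‖ ^ 2 ≤ ‖S * S + T * T‖ * ‖y‖ ^ 2 := by
  rw [S.apply_norm_sq_eq_inner_adjoint_left, T.apply_norm_sq_eq_inner_adjoint_left,
    hS.adjoint_eq, hT.adjoint_eq, ← map_add, ← inner_add_left]
  calc RCLike.re ⟪(S * S + T * T) y, y⟫_𝕜 ≤ ‖(S * S + T * T) y‖ * ‖y‖ := re_inner_le_norm _ _
    _ ≤ ‖S * S + T * T‖ * ‖y‖ * ‖y‖ := by gcongr; exact le_opNorm _ _
    _ = ‖S * S + T * T‖ * ‖y‖ ^ 2 := by ring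

end InnerProductSpace

section CStarAlgebra

variable {A : Type*} [CStarAlgebra A] [PartialOrder A] [StarOrderedRing A] {a : A}

lemma cfc_rpow_mul_cfc_rpow (ha : 0 ≤ a) {s u : ℝ} (hs : 0 ≤ s) (hu : 0 ≤ u) :
    cfc (fun x : ℝ => x ^ s) a * cfc (fun x : ℝ => x ^ u) a = cfc (fun x : ℝ => x ^ (s + u)) a := by
  rw [← cfc_mul _ _ a (Real.continuous_rpow_const hs).continuousOn
    (Real.continuous_rpow_const hu).continuousOn]
  exact cfc_congr fun x hx ↦ (Real.rpow_add_of_nonneg (spectrum_nonneg_of_nonneg ha hx) hs hu).symm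

lemma cfc_rpow_one (ha : 0 ≤ a) : cfc (fun x : ℝ => x ^ (1 : ℝ)) a = a := by
  simp only [Real.rpow_one]
  exact cfc_id' ℝ a

lemma norm_cfc_rpow_add_cfc_rpow_div_two_rpow_le (ha : 0 ≤ a) {p q r : ℝ} (hp : 0 ≤ p)
    (hq : 0 ≤ q) (hr : 1 ≤ r) :
    (‖cfc (fun x : ℝ => x ^ p) a + cfc (fun x : ℝ => x ^ q) a‖ / 2) ^ r ≤
      ‖cfc (fun x : ℝ => x ^ (p * r)) a + cfc (fun x : ℝ => x ^ (q * r)) a‖ / 2 := by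
  have hr0 : r ≠ 0 := by positivity
  rw [← cfc_add a _ _ (Real.continuous_rpow_const hp).continuousOn
      (Real.continuous_rpow_const hq).continuousOn,
    ← cfc_add a _ _ (Real.continuous_rpow_const (by positivity)).continuousOn
      (Real.continuous_rpow_const (by positivity)).continuousOn]
  set N := ‖cfc (fun x : ℝ => x ^ (p * r) + x ^ (q * r)) a‖
  have hN : ‖cfc (fun x : ℝ => x ^ p + x ^ q) a‖ / 2 ≤ (N / 2) ^ r⁻¹ := by
    rw [div_le_iff₀ two_pos]
    refine norm_cfc_le (by positivity) fun x hx ↦ ?_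
    have hx0 := spectrum_nonneg_of_nonneg ha hx
    have hxN : x ^ (p * r) + x ^ (q * r) ≤ N :=
      (Real.le_norm_self _).trans (norm_apply_le_norm_cfc _ a hx
        ((Real.continuous_rpow_const (by positivity)).add
          (Real.continuous_rpow_const (by positivity))).continuousOn)
    have hmean : ((x ^ p + x ^ q) / 2) ^ r ≤ N / 2 := by
      have := rpow_add_div_two_le (Real.rpow_nonneg hx0 p) (Real.rpow_nonneg hx0 q) hr
      rw [← Real.rpow_mul hx0, ← Real.rpow_mul hx0] at this
      linarith
    have := Real.rpow_le_rpow (by positivity) hmean (inv_nonneg.2 (by positivity : (0 : ℝ) ≤ r))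
    rw [Real.rpow_rpow_inv (by positivity) hr0] at this
    rw [Real.norm_of_nonneg (by positivity)]
    linarith
  calc (‖cfc (fun x : ℝ => x ^ p + x ^ q) a‖ / 2) ^ r ≤ ((N / 2) ^ r⁻¹) ^ r := by gcongr
    _ = N / 2 := Real.rpow_inv_rpow (by positivity) hr0

end CStarAlgebra

section NumericalRadius

variable {E : Type*} [NormedAddCommGroup E] [InnerProductSpace ℂ E]

lemma nrad_nonneg_s2 (A : E →L[ℂ] E) : 0 ≤ nrad A :=
  Real.sSup_nonneg fun _ ⟨_, _, hr⟩ ↦ hr ▸ norm_nonneg _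

lemma nrad_le_of_forall {A : E →L[ℂ] E} {c : ℝ} (hc : 0 ≤ c)
    (h : ∀ x : E, ‖x‖ = 1 → ‖⟪A x, x⟫_ℂ‖ ≤ c) : nrad A ≤ c :=
  Real.sSup_le (fun _ ⟨x, hx, hr⟩ ↦ hr ▸ h x hx) hc

lemma norm_inner_apply_self_le_nrad_mul (A : E →L[ℂ] E) (y : E) :
    ‖⟪A y, y⟫_ℂ‖ ≤ nrad A * ‖y‖ ^ 2 := by
  rcases eq_or_ne y 0 with rfl | hy
  · simp
  have hy0 : 0 < ‖y‖ := norm_pos_iff.2 hy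
  set x : E := ((‖y‖⁻¹ : ℝ) : ℂ) • y
  have hx : ‖x‖ = 1 := by simp [x, norm_smul, hy0.ne']
  have hxy : ‖⟪A x, x⟫_ℂ‖ = ‖⟪A y, y⟫_ℂ‖ / ‖y‖ ^ 2 := by
    simp only [x, map_smul, inner_smul_left, inner_smul_right, norm_mul, Complex.conj_ofReal,
      Complex.norm_real, Real.norm_of_nonneg (inv_nonneg.2 hy0.le)]
    field_simp
  have hbdd : BddAbove {r : ℝ | ∃ x : E, ‖x‖ = 1 ∧ r = ‖⟪A x, x⟫_ℂ‖} := by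
    refine ⟨‖A‖, fun _ ⟨x, hx, hr⟩ ↦ hr ▸ ?_⟩
    calc ‖⟪A x, x⟫_ℂ‖ ≤ ‖A x‖ * ‖x‖ := norm_inner_le_norm _ _
      _ ≤ ‖A‖ * ‖x‖ * ‖x‖ := by gcongr; exact A.le_opNorm x
      _ = ‖A‖ := by rw [hx, mul_one, mul_one]
  have hle : ‖⟪A x, x⟫_ℂ‖ ≤ nrad A := le_csSup hbdd ⟨x, hx, rfl⟩
  rwa [hxy, div_le_iff₀ (by positivity)] at hle

end NumericalRadius

lemma norm_cfc_rpow_apply_sq_add_le {P : H →L[ℂ] H} (hP : 0 ≤ P) {s u : ℝ} (hs : 0 ≤ s)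
    (hu : 0 ≤ u) (y : H) :
    ‖cfc (fun x : ℝ => x ^ s) P y‖ ^ 2 + ‖cfc (fun x : ℝ => x ^ u) P y‖ ^ 2 ≤
      ‖cfc (fun x : ℝ => x ^ (2 * s)) P + cfc (fun x : ℝ => x ^ (2 * u)) P‖ * ‖y‖ ^ 2 := by
  rw [two_mul, two_mul, ← cfc_rpow_mul_cfc_rpow hP hs hs, ← cfc_rpow_mul_cfc_rpow hP hu hu]
  exact norm_sq_add_norm_sq_le (cfc_predicate _ _) (cfc_predicate _ _) y

lemma norm_smul_add_apply_sq_le {K L : H →L[ℂ] H} (hK : IsSelfAdjoint K) {z : ℂ} (hz : ‖z‖ = 1)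
    (y : H) : ‖(z • L + K) y‖ ^ 2 ≤ ‖L y‖ ^ 2 + ‖K y‖ ^ 2 + 2 * nrad (K * L) * ‖y‖ ^ 2 := by
  have hcross : RCLike.re ⟪z • L y, K y⟫_ℂ ≤ nrad (K * L) * ‖y‖ ^ 2 := by
    have hKL : ⟪L y, K y⟫_ℂ = ⟪(K * L) y, y⟫_ℂ := by
      have h := adjoint_inner_right K (L y) y
      rw [hK.adjoint_eq] at h
      exact h
    calc RCLike.re ⟪z • L y, K y⟫_ℂ ≤ ‖⟪z • L y, K y⟫_ℂ‖ := RCLike.re_le_norm _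
      _ = ‖⟪(K * L) y, y⟫_ℂ‖ := by
        rw [inner_smul_left, norm_mul, RCLike.norm_conj, hz, one_mul, hKL]
      _ ≤ nrad (K * L) * ‖y‖ ^ 2 := norm_inner_apply_self_le_nrad_mul _ _
  rw [add_apply, smul_apply, norm_add_sq (𝕜 := ℂ), norm_smul, hz, one_mul]
  linarith

lemma four_mul_nrad_mul_le {K L : H →L[ℂ] H} (hK : IsSelfAdjoint K) {M : ℝ} (hM0 : 0 ≤ M)
    (hM : ∀ y, ‖K y‖ ^ 2 + ‖L y‖ ^ 2 ≤ M * ‖y‖ ^ 2) :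
    4 * nrad (L * K) ≤ M + 2 * nrad (K * L) := by
  have hW := nrad_nonneg_s2 (K * L)
  rw [← le_div_iff₀' four_pos]
  refine nrad_le_of_forall (by positivity) fun x hx ↦ ?_
  obtain ⟨w, hw, hwx⟩ := exists_norm_eq_one_four_mul_norm_inner_le (𝕜 := ℂ) (adjoint L x) (K x)
  set D := starRingEnd ℂ w • L + K
  have hDx : adjoint D x = w • adjoint L x + K x := by
    simp only [D, ← star_eq_adjoint, star_add, star_smul, hK.star_eq, RCLike.star_def,
      RCLike.conj_conj]
    rfl
  have hD : ‖D‖ ^ 2 ≤ M + 2 * nrad (K * L) :=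
    sq_opNorm_le_of_forall (by positivity) fun y ↦
      (norm_smul_add_apply_sq_le hK (by rwa [RCLike.norm_conj]) y).trans (by linarith [hM y])
  have hDx_le : ‖adjoint D x‖ ≤ ‖D‖ := by
    simpa [hx] using (adjoint D).le_opNorm x
  have hLK : ‖⟪(L * K) x, x⟫_ℂ‖ = ‖⟪adjoint L x, K x⟫_ℂ‖ := by
    rw [norm_inner_symm (adjoint L x), adjoint_inner_right]; rfl
  rw [le_div_iff₀' four_pos, hLK]
  calc 4 * ‖⟪adjoint L x, K x⟫_ℂ‖ ≤ ‖adjoint D x‖ ^ 2 := hDx ▸ hwx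
    _ ≤ ‖D‖ ^ 2 := pow_le_pow_left₀ (norm_nonneg _) hDx_le 2
    _ ≤ M + 2 * nrad (K * L) := hD

theorem stmt_2_general (A U : H →L[ℂ] H)
    (hU : A = U * oabs A)
    (hiso : ∀ x ∈ (LinearMap.ker (U : H →ₗ[ℂ] H))ᗮ, ‖U x‖ = ‖x‖)
    (t r : ℝ) (ht : t ∈ Set.Icc (0 : ℝ) 1) (hr : 1 ≤ r) :
    nrad A ^ r ≤
      (1 / 4) * ‖cfc (fun x : ℝ => x ^ (2 * t * r)) (oabs A)
          + cfc (fun x : ℝ => x ^ (2 * (1 - t) * r)) (oabs A)‖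
      + (1 / 2) * nrad (cfc (fun x : ℝ => x ^ t) (oabs A) * U
          * cfc (fun x : ℝ => x ^ (1 - t)) (oabs A)) ^ r := by
  obtain ⟨ht0, ht1⟩ := ht
  have ht1' : 0 ≤ 1 - t := sub_nonneg.2 ht1
  set P := oabs A
  have hP : 0 ≤ P := cfc_nonneg fun x _ ↦ Real.sqrt_nonneg x
  set K := cfc (fun x : ℝ => x ^ t) P
  set Q := cfc (fun x : ℝ => x ^ (1 - t)) P
  have hA : A = U * Q * K := by
    rw [mul_assoc, cfc_rpow_mul_cfc_rpow hP ht1' ht0, sub_add_cancel, cfc_rpow_one hP, ← hU]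
  set S := cfc (fun x : ℝ => x ^ (2 * t)) P + cfc (fun x : ℝ => x ^ (2 * (1 - t))) P
  have hnrad : 4 * nrad A ≤ ‖S‖ + 2 * nrad (K * U * Q) := by
    rw [hA, mul_assoc K]
    refine four_mul_nrad_mul_le (cfc_predicate _ _) (norm_nonneg _) fun y ↦ ?_
    calc ‖K y‖ ^ 2 + ‖U (Q y)‖ ^ 2 ≤ ‖K y‖ ^ 2 + ‖Q y‖ ^ 2 := by
          gcongr; exact norm_apply_le_of_isometric_on_ker_orthogonal hiso (Q y)
      _ ≤ ‖S‖ * ‖y‖ ^ 2 := norm_cfc_rpow_apply_sq_add_le hP ht0 ht1' y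
  have hspec := norm_cfc_rpow_add_cfc_rpow_div_two_rpow_le hP (by positivity : 0 ≤ 2 * t)
    (by positivity : 0 ≤ 2 * (1 - t)) hr
  have hW0 := nrad_nonneg_s2 (K * U * Q)
  calc nrad A ^ r ≤ ((‖S‖ / 2 + nrad (K * U * Q)) / 2) ^ r := by
        gcongr
        · exact nrad_nonneg_s2 A
        · linarith
    _ ≤ ((‖S‖ / 2) ^ r + nrad (K * U * Q) ^ r) / 2 := rpow_add_div_two_le (by positivity) hW0 hr
    _ ≤ _ := by linarith

theorem stmt_2 (A U : H →L[ℂ] H)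
    (hU : A = U * oabs A)
    (hker : LinearMap.ker (U : H →ₗ[ℂ] H) = (LinearMap.range (oabs A : H →ₗ[ℂ] H))ᗮ)
    (hiso : ∀ x ∈ (LinearMap.ker (U : H →ₗ[ℂ] H))ᗮ, ‖U x‖ = ‖x‖)
    (t r : ℝ) (ht : t ∈ Set.Icc (0 : ℝ) 1) (hr : 1 ≤ r) :
    nrad A ^ r ≤
      (1 / 4) * ‖cfc (fun x : ℝ => x ^ (2 * t * r)) (oabs A)
          + cfc (fun x : ℝ => x ^ (2 * (1 - t) * r)) (oabs A)‖
      + (1 / 2) * nrad (cfc (fun x : ℝ => x ^ t) (oabs A) * U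
          * cfc (fun x : ℝ => x ^ (1 - t)) (oabs A)) ^ r :=
  stmt_2_general A U hU hiso t r ht hr
end
end

section
/- For positive bounded operators A, B on a complex Hilbert space and r ≥ 1, ‖A^{1/2} B^{1/2}‖^r = r(AB)^{r/2}, where r(·) denotes the spectral radius; in particular ‖A^{1/2}B^{1/2}‖² = r(AB). -/
/-!
Write `s = a^{1/2}` and `t = b^{1/2}`. By the C⋆-identity, `‖s t‖² = ‖(s t)⋆ (s t)‖ = ‖t a t‖`,
and since `t a t` is self-adjoint its norm is its spectral radius. Finally `t (a t)` and `(a t) t = a b`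
have the same nonzero spectrum, hence the same spectral radius; the general exponent `r` is then
just real arithmetic.
-/

noncomputable section
open ContinuousLinearMap

variable {H : Type*} [NormedAddCommGroup H] [InnerProductSpace ℂ H] [CompleteSpace H]

theorem spectralRadius_mul_comm {𝕜 R : Type*} [NormedField 𝕜] [Ring R] [Algebra 𝕜 R]
    (a b : R) : spectralRadius 𝕜 (a * b) = spectralRadius 𝕜 (b * a) := by
  have key : ∀ x y : R, spectralRadius 𝕜 (x * y) ≤ spectralRadius 𝕜 (y * x) := by
    intro x y
    refine iSup₂_le fun k hk => ?_
    rcases eq_or_ne k 0 with rfl | hk0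
    · simp
    · have hk' : k ∈ spectrum 𝕜 (y * x) \ {0} :=
        spectrum.nonzero_mul_comm (𝕜 := 𝕜) x y ▸ ⟨hk, hk0⟩
      exact le_iSup₂ (f := fun k (_ : k ∈ spectrum 𝕜 (y * x)) => (‖k‖₊ : ENNReal)) k hk'.1
  exact le_antisymm (key a b) (key b a)

namespace CStarAlgebra

variable {A : Type*} [CStarAlgebra A] [PartialOrder A] [StarOrderedRing A]

theorem cfc_rpow_one_half_eq_sqrt {a : A} (ha : 0 ≤ a) :
    cfc (fun x : ℝ => x ^ (1 / 2 : ℝ)) a = CFC.sqrt a :=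
  (CFC.rpow_eq_cfc_real ha).symm.trans CFC.sqrt_eq_rpow.symm

theorem norm_sqrt_mul_sqrt_sq {a b : A} (ha : 0 ≤ a) (hb : 0 ≤ b) :
    ‖CFC.sqrt a * CFC.sqrt b‖ ^ 2 = (spectralRadius ℂ (a * b)).toReal := by
  have hstar : star (CFC.sqrt a * CFC.sqrt b) * (CFC.sqrt a * CFC.sqrt b)
      = CFC.sqrt b * (a * CFC.sqrt b) := by
    rw [star_mul, (CFC.sqrt_nonneg a).isSelfAdjoint.star_eq,
      (CFC.sqrt_nonneg b).isSelfAdjoint.star_eq, mul_assoc, ← mul_assoc (CFC.sqrt a),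
      CFC.sqrt_mul_sqrt_self a ha]
  rw [← toReal_spectralRadius_star_mul_self_eq_norm_sq, hstar, spectralRadius_mul_comm,
    mul_assoc, CFC.sqrt_mul_sqrt_self b hb]

end CStarAlgebra

theorem stmt_10_general (A B : H →L[ℂ] H) (hA : A.IsPositive) (hB : B.IsPositive)
    (r : ℝ) :
    ‖cfc (fun x : ℝ => x ^ (1 / 2 : ℝ)) A * cfc (fun x : ℝ => x ^ (1 / 2 : ℝ)) B‖ ^ r
        = (spectralRadius ℂ (A * B)).toReal ^ (r / 2) ∧
      ‖cfc (fun x : ℝ => x ^ (1 / 2 : ℝ)) A * cfc (fun x : ℝ => x ^ (1 / 2 : ℝ)) B‖ ^ (2 : ℝ)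
        = (spectralRadius ℂ (A * B)).toReal := by
  have hA' := (nonneg_iff_isPositive A).mpr hA
  have hB' := (nonneg_iff_isPositive B).mpr hB
  rw [CStarAlgebra.cfc_rpow_one_half_eq_sqrt hA', CStarAlgebra.cfc_rpow_one_half_eq_sqrt hB',
    ← CStarAlgebra.norm_sqrt_mul_sqrt_sq hA' hB', ← Real.rpow_natCast,
    ← Real.rpow_mul (norm_nonneg _)]
  norm_num [mul_div_cancel₀]

theorem stmt_10 (A B : H →L[ℂ] H) (hA : A.IsPositive) (hB : B.IsPositive)
    (r : ℝ) (hr : 1 ≤ r) :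
    ‖cfc (fun x : ℝ => x ^ (1 / 2 : ℝ)) A * cfc (fun x : ℝ => x ^ (1 / 2 : ℝ)) B‖ ^ r
        = (spectralRadius ℂ (A * B)).toReal ^ (r / 2) ∧
      ‖cfc (fun x : ℝ => x ^ (1 / 2 : ℝ)) A * cfc (fun x : ℝ => x ^ (1 / 2 : ℝ)) B‖ ^ (2 : ℝ)
        = (spectralRadius ℂ (A * B)).toReal :=
  stmt_10_general A B hA hB r
end
end

section
/- Let A, B be bounded linear operators on a complex Hilbert space and let f, g be non-negative non-decreasing continuous functions on [0,∞) with f(x)g(x) = x for x ≥ 0. Then ‖A + B‖ ≤ max(‖A‖, ‖B‖) + (1/2)(‖f(|B|)g(|A|)‖ + ‖f(|A*|)g(|B*|)‖). -/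
/-!
Mixed Schwarz inequality: if `f * g = id` on `[0, ∞)`, then
`‖⟪C x, y⟫‖ ≤ ‖g(|C|) x‖ * ‖f(|C*|) y‖`. It follows from the intertwining relation
`C * u(C*C) = u(CC*) * C`, after replacing `g(|C|)` by the invertible `g(|C|) + ε`.

For `y = (A + B) x` it gives `‖y‖² ≤ ‖g(|A|) x‖ ‖f(|A*|) y‖ + ‖f(|B|) x‖ ‖g(|B*|) y‖`. Rescale
`g(|·|)` by `μ` and `f(|·|)` by `μ⁻¹` so that all four operators have norm at most `√m`, where
`m = max ‖A‖ ‖B‖`, and apply Cauchy–Schwarz in `ℝ²`. The resulting sums of squares are controlled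
by `‖R x‖² + ‖S x‖² ≤ (max ‖R‖² ‖S‖² + ‖S R*‖) ‖x‖²`. With `s = ‖f(|B|) g(|A|)‖` and
`t = ‖f(|A*|) g(|B*|)‖` this yields `‖y‖ ≤ √((m + s)(m + t)) ‖x‖ ≤ (m + (s + t) / 2) ‖x‖`.
-/

noncomputable section
open ContinuousLinearMap

variable {H : Type*} [NormedAddCommGroup H] [InnerProductSpace ℂ H] [CompleteSpace H]

open Polynomial
open scoped InnerProductSpace

lemma le_add_div_two_mul_of_sq_le {X Y p₁ p₂ q₁ q₂ u v : ℝ} (hX : 0 ≤ X) (hY : 0 ≤ Y)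
    (hu : 0 ≤ u) (hv : 0 ≤ v) (h : Y ^ 2 ≤ p₁ * q₁ + p₂ * q₂)
    (hp : p₁ ^ 2 + p₂ ^ 2 ≤ u * X ^ 2) (hq : q₁ ^ 2 + q₂ ^ 2 ≤ v * Y ^ 2) :
    Y ≤ (u + v) / 2 * X := by
  have hcs : (p₁ * q₁ + p₂ * q₂) ^ 2 ≤ (p₁ ^ 2 + p₂ ^ 2) * (q₁ ^ 2 + q₂ ^ 2) := by
    nlinarith [sq_nonneg (p₁ * q₂ - p₂ * q₁)]
  have hamgm : u * v ≤ ((u + v) / 2) ^ 2 := by nlinarith [sq_nonneg (u - v)]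
  have h4 : (Y ^ 2) ^ 2 ≤ ((u + v) / 2 * X * Y) ^ 2 := calc
    (Y ^ 2) ^ 2 ≤ (p₁ * q₁ + p₂ * q₂) ^ 2 := pow_le_pow_left₀ (sq_nonneg Y) h 2
    _ ≤ (u * X ^ 2) * (v * Y ^ 2) := hcs.trans (mul_le_mul hp hq (by positivity) (by positivity))
    _ = u * v * (X * Y) ^ 2 := by ring
    _ ≤ ((u + v) / 2) ^ 2 * (X * Y) ^ 2 := by gcongr
    _ = ((u + v) / 2 * X * Y) ^ 2 := by ring
  have h5 : Y ^ 2 ≤ (u + v) / 2 * X * Y :=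
    (pow_le_pow_iff_left₀ (sq_nonneg Y) (by positivity) two_ne_zero).mp h4
  nlinarith [mul_nonneg (by positivity : 0 ≤ (u + v) / 2) hX]

theorem SemiconjBy.aeval_right {R A : Type*} [CommSemiring R] [Semiring A] [Algebra R A]
    {c p q : A} (h : SemiconjBy c p q) (P : R[X]) : SemiconjBy c (aeval p P) (aeval q P) := by
  induction P using Polynomial.induction_on with
  | C r => simpa only [aeval_C] using (Algebra.commute_algebraMap_right r c).semiconjBy
  | add P Q hP hQ => simpa only [map_add] using hP.add_right hQ
  | monomial n r _ =>
    simpa only [map_mul, aeval_C, map_pow, aeval_X] using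
      (Algebra.commute_algebraMap_right r c).semiconjBy.mul_right (h.pow_right (n + 1))

section CStarAlgebra

variable {A : Type*} [CStarAlgebra A]

lemma norm_cfc_sub_aeval_le {a : A} (ha : IsSelfAdjoint a) {u : ℝ → ℝ}
    (hu : ContinuousOn u (spectrum ℝ a)) (P : ℝ[X]) {ε : ℝ} (hε : 0 ≤ ε)
    (h : ∀ x ∈ spectrum ℝ a, |P.eval x - u x| ≤ ε) : ‖cfc u a - aeval a P‖ ≤ ε := by
  rw [← cfc_polynomial P a, ← cfc_sub u (P.eval ·) a]
  exact norm_cfc_le hε fun x hx => by rw [Real.norm_eq_abs, abs_sub_comm]; exact h x hx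

lemma spectrum_real_subset_Icc (a : A) {M : ℝ} (hM : ‖a‖ * ‖(1 : A)‖ ≤ M) :
    spectrum ℝ a ⊆ Set.Icc (-M) M := fun x hx => by
  have := spectrum.subset_closedBall_norm_mul (𝕜 := ℝ) a hx
  rw [Real.closedBall_eq_Icc, zero_sub, zero_add] at this
  exact ⟨by linarith [this.1], by linarith [this.2]⟩

theorem SemiconjBy.cfc_right {c p q : A} (h : SemiconjBy c p q) (hp : IsSelfAdjoint p)
    (hq : IsSelfAdjoint q) {u : ℝ → ℝ} (hu : Continuous u) :
    SemiconjBy c (cfc u p) (cfc u q) := by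
  set M := (‖p‖ + ‖q‖) * ‖(1 : A)‖
  rw [SemiconjBy, ← sub_eq_zero, ← norm_le_zero_iff]
  refine le_of_forall_pos_le_add fun ε hε => ?_
  set δ := ε / (2 * ‖c‖ + 1)
  obtain ⟨P, hP⟩ := exists_polynomial_near_of_continuousOn (-M) M u hu.continuousOn δ
    (by positivity)
  have happrox : ∀ a : A, IsSelfAdjoint a → ‖a‖ ≤ ‖p‖ + ‖q‖ → ‖cfc u a - aeval a P‖ ≤ δ :=
    fun a ha haM => norm_cfc_sub_aeval_le ha hu.continuousOn P (by positivity) fun x hx =>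
      (hP x (spectrum_real_subset_Icc a (mul_le_mul_of_nonneg_right haM (norm_nonneg _)) hx)).le
  calc ‖c * cfc u p - cfc u q * c‖
      = ‖c * (cfc u p - aeval p P) - (cfc u q - aeval q P) * c‖ := by
        rw [mul_sub, sub_mul, (h.aeval_right P).eq]; abel_nf
    _ ≤ ‖c‖ * δ + δ * ‖c‖ := by
        refine (norm_sub_le _ _).trans (add_le_add ?_ ?_)
        · exact (norm_mul_le _ _).trans (by gcongr; exact happrox p hp (by simp))
        · exact (norm_mul_le _ _).trans (by gcongr; exact happrox q hq (by simp))
    _ ≤ 0 + ε := by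
        have hδ : δ * (2 * ‖c‖ + 1) = ε := div_mul_cancel₀ _ (by positivity)
        nlinarith [norm_nonneg c, show 0 ≤ δ by positivity]

lemma norm_cfc_le_of_monotoneOn [PartialOrder A] [StarOrderedRing A] {a : A} (ha : 0 ≤ a)
    {w : ℝ → ℝ} (hw0 : ∀ x, 0 ≤ x → 0 ≤ w x) (hwm : MonotoneOn w (Set.Ici 0)) :
    ‖cfc w a‖ ≤ w ‖a‖ := by
  rcases subsingleton_or_nontrivial A with hA | hA
  · rw [Subsingleton.elim (cfc w a) 0, norm_zero]; exact hw0 _ (norm_nonneg a)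
  refine norm_cfc_le (hw0 _ (norm_nonneg a)) fun x hx => ?_
  have hx0 : 0 ≤ x := spectrum_nonneg_of_nonneg ha hx
  have hxa : x ≤ ‖a‖ := (Real.norm_of_nonneg hx0).symm.trans_le (spectrum.norm_le_norm_of_mem hx)
  rw [Real.norm_of_nonneg (hw0 x hx0)]
  exact hwm hx0 (norm_nonneg a) hxa

lemma norm_cfc_abs_le [PartialOrder A] [StarOrderedRing A] {w : ℝ → ℝ}
    (hw0 : ∀ x, 0 ≤ x → 0 ≤ w x) (hwm : MonotoneOn w (Set.Ici 0)) (a : A) :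
    ‖cfc w (CFC.abs a)‖ ≤ w ‖a‖ :=
  CFC.norm_abs (a := a) ▸ norm_cfc_le_of_monotoneOn (CFC.abs_nonneg a) hw0 hwm

end CStarAlgebra

section Operators

variable {𝕜 E : Type*} [RCLike 𝕜] [NormedAddCommGroup E] [InnerProductSpace 𝕜 E]
  [CompleteSpace E]

lemma norm_apply_le_of_adjoint_mul_self_le {S T : E →L[𝕜] E}
    (h : adjoint T * T ≤ adjoint S * S) (y : E) : ‖T y‖ ≤ ‖S y‖ := by
  have := (le_def _ _ |>.mp h).re_inner_nonneg_left y
  rw [sub_apply, inner_sub_left, map_sub, sub_nonneg, mul_apply_eq_comp, mul_apply_eq_comp,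
    adjoint_inner_left, adjoint_inner_left, inner_self_eq_norm_sq, inner_self_eq_norm_sq] at this
  exact (pow_le_pow_iff_left₀ (norm_nonneg _) (norm_nonneg _) two_ne_zero).mp this

theorem norm_sq_add_norm_sq_le_s16 (R S : E →L[𝕜] E) (x : E) :
    ‖R x‖ ^ 2 + ‖S x‖ ^ 2 ≤ (max (‖R‖ ^ 2) (‖S‖ ^ 2) + ‖S * adjoint R‖) * ‖x‖ ^ 2 := by
  set M := max (‖R‖ ^ 2) (‖S‖ ^ 2)
  set K := M + ‖S * adjoint R‖
  have hK : 0 ≤ K := by positivity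
  set w := adjoint R (R x) + adjoint S (S x)
  have hρ : ‖R x‖ ^ 2 + ‖S x‖ ^ 2 = RCLike.re ⟪w, x⟫_𝕜 := by
    rw [inner_add_left, map_add, adjoint_inner_left, adjoint_inner_left,
      inner_self_eq_norm_sq, inner_self_eq_norm_sq]
  have hcross :
      RCLike.re ⟪adjoint R (R x), adjoint S (S x)⟫_𝕜 ≤ ‖S * adjoint R‖ * (‖R x‖ * ‖S x‖) := by
    rw [adjoint_inner_right, ← mul_apply_eq_comp, ← mul_assoc]
    refine (RCLike.re_le_norm _).trans ((norm_inner_le_norm _ _).trans ?_)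
    exact mul_le_mul_of_nonneg_right ((S * adjoint R).le_opNorm _) (norm_nonneg _)
  have hsq : ∀ T : E →L[𝕜] E, ‖T‖ ^ 2 ≤ M → ‖adjoint T (T x)‖ ^ 2 ≤ M * ‖T x‖ ^ 2 :=
    fun T hT => calc
      ‖adjoint T (T x)‖ ^ 2 ≤ (‖T‖ * ‖T x‖) ^ 2 := by
        gcongr; exact (le_opNorm _ _).trans_eq (by rw [adjoint.norm_map])
      _ ≤ M * ‖T x‖ ^ 2 := by rw [mul_pow]; gcongr
  have hw : ‖w‖ ^ 2 ≤ K * (‖R x‖ ^ 2 + ‖S x‖ ^ 2) := by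
    rw [norm_add_sq (𝕜 := 𝕜)]
    have := hsq R (le_max_left _ _)
    have := hsq S (le_max_right _ _)
    nlinarith [sq_nonneg (‖R x‖ - ‖S x‖), norm_nonneg (S * adjoint R)]
  have hwx : ‖w‖ ≤ K * ‖x‖ := by
    have : ‖w‖ ^ 2 ≤ K * ‖x‖ * ‖w‖ := by
      calc ‖w‖ ^ 2 ≤ K * RCLike.re ⟪w, x⟫_𝕜 := hρ ▸ hw
        _ ≤ K * ‖x‖ * ‖w‖ := by
          rw [mul_assoc, mul_comm ‖x‖]
          exact mul_le_mul_of_nonneg_left ((RCLike.re_le_norm _).trans (norm_inner_le_norm _ _)) hK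
    nlinarith [norm_nonneg w, mul_nonneg hK (norm_nonneg x)]
  calc ‖R x‖ ^ 2 + ‖S x‖ ^ 2 = RCLike.re ⟪w, x⟫_𝕜 := hρ
    _ ≤ ‖w‖ * ‖x‖ := (RCLike.re_le_norm _).trans (norm_inner_le_norm _ _)
    _ ≤ K * ‖x‖ ^ 2 := by rw [sq, ← mul_assoc]; gcongr

theorem weighted_norm_sq_add_le {G F : E →L[𝕜] E} (hG : IsSelfAdjoint G) {μ m : ℝ} (hμ : 0 < μ)
    (hGm : (μ * ‖G‖) ^ 2 ≤ m) (hFm : (‖F‖ / μ) ^ 2 ≤ m) (x : E) :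
    (μ * ‖G x‖) ^ 2 + (‖F x‖ / μ) ^ 2 ≤ (m + ‖F * G‖) * ‖x‖ ^ 2 := by
  have hnorm : ∀ r : ℝ, 0 < r → ‖(r : 𝕜)‖ = r := fun r hr => by
    rw [RCLike.norm_ofReal, abs_of_pos hr]
  have hadj : adjoint ((μ : 𝕜) • G) = (μ : 𝕜) • G := by
    rw [← star_eq_adjoint, star_smul, hG.star_eq, RCLike.star_def, RCLike.conj_ofReal]
  have hprod : ((μ⁻¹ : ℝ) : 𝕜) • F * (μ : 𝕜) • G = F * G := by
    rw [smul_mul_smul_comm, ← RCLike.ofReal_mul, inv_mul_cancel₀ hμ.ne', RCLike.ofReal_one,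
      one_smul]
  have := norm_sq_add_norm_sq_le_s16 ((μ : 𝕜) • G) (((μ⁻¹ : ℝ) : 𝕜) • F) x
  rw [hadj, hprod, smul_apply, smul_apply, norm_smul, norm_smul, norm_smul, norm_smul,
    hnorm μ hμ, hnorm μ⁻¹ (inv_pos.mpr hμ), ← div_eq_inv_mul, ← div_eq_inv_mul] at this
  exact this.trans (by gcongr; exact max_le hGm hFm)


theorem norm_add_le_of_norm_inner_le {A B G₁ F₁ G₂ F₂ : E →L[𝕜] E} {φ γ : ℝ} (hφ : 0 < φ)
    (hγ : 0 < γ) (hG₁ : IsSelfAdjoint G₁) (hG₂ : IsSelfAdjoint G₂) (hG₁γ : ‖G₁‖ ≤ γ)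
    (hG₂γ : ‖G₂‖ ≤ γ) (hF₁φ : ‖F₁‖ ≤ φ) (hF₂φ : ‖F₂‖ ≤ φ)
    (hA : ∀ x y, ‖⟪A x, y⟫_𝕜‖ ≤ ‖G₁ x‖ * ‖F₂ y‖) (hB : ∀ x y, ‖⟪B x, y⟫_𝕜‖ ≤ ‖F₁ x‖ * ‖G₂ y‖) :
    ‖A + B‖ ≤ φ * γ + (‖F₁ * G₁‖ + ‖F₂ * G₂‖) / 2 := by
  set μ := √(φ / γ)
  have hμ : 0 < μ := Real.sqrt_pos.mpr (div_pos hφ hγ)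
  have hμ2 : μ ^ 2 = φ / γ := Real.sq_sqrt (div_pos hφ hγ).le
  have hG : ∀ G : E →L[𝕜] E, ‖G‖ ≤ γ → (μ * ‖G‖) ^ 2 ≤ φ * γ := fun G hG => calc
    (μ * ‖G‖) ^ 2 ≤ (μ * γ) ^ 2 := by gcongr
    _ = φ * γ := by rw [mul_pow, hμ2]; field_simp
  have hF : ∀ F : E →L[𝕜] E, ‖F‖ ≤ φ → (‖F‖ / μ) ^ 2 ≤ φ * γ := fun F hF => calc
    (‖F‖ / μ) ^ 2 ≤ (φ / μ) ^ 2 := by gcongr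
    _ = φ * γ := by rw [div_pow, hμ2]; field_simp
  refine opNorm_le_bound _ (by positivity) fun x => ?_
  set y := (A + B) x
  have hy : ‖y‖ ^ 2 ≤ μ * ‖G₁ x‖ * (‖F₂ y‖ / μ) + ‖F₁ x‖ / μ * (μ * ‖G₂ y‖) := calc
    ‖y‖ ^ 2 = RCLike.re ⟪A x, y⟫_𝕜 + RCLike.re ⟪B x, y⟫_𝕜 := by
      rw [← map_add, ← inner_add_left, ← add_apply, inner_self_eq_norm_sq]
    _ ≤ ‖G₁ x‖ * ‖F₂ y‖ + ‖F₁ x‖ * ‖G₂ y‖ :=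
      add_le_add ((RCLike.re_le_norm _).trans (hA x y)) ((RCLike.re_le_norm _).trans (hB x y))
    _ = μ * ‖G₁ x‖ * (‖F₂ y‖ / μ) + ‖F₁ x‖ / μ * (μ * ‖G₂ y‖) := by field_simp
  have hq := weighted_norm_sq_add_le hG₂ hμ (hG G₂ hG₂γ) (hF F₂ hF₂φ) y
  refine (le_add_div_two_mul_of_sq_le (u := φ * γ + ‖F₁ * G₁‖) (v := φ * γ + ‖F₂ * G₂‖)
    (norm_nonneg x) (norm_nonneg y) (by positivity)
    (by positivity) hy (weighted_norm_sq_add_le hG₁ hμ (hG G₁ hG₁γ) (hF F₁ hF₁φ) x)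
    (by rwa [add_comm] at hq)).trans_eq ?_
  ring

end Operators

section MixedSchwarz

variable (C : H →L[ℂ] H)

lemma isSelfAdjoint_adjoint_mul_self : IsSelfAdjoint (adjoint C * C) :=
  (isPositive_adjoint_comp_self C).isSelfAdjoint

lemma mul_adjoint_nonneg : 0 ≤ C * adjoint C :=
  (nonneg_iff_isPositive _).mpr (isPositive_self_comp_adjoint C)

lemma mul_cfc_adjoint_mul_self_mul_adjoint {v : ℝ → ℝ} (hv : Continuous v) :
    C * cfc v (adjoint C * C) * adjoint C = cfc (fun t => v t * t) (C * adjoint C) := by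
  have hCpq : SemiconjBy C (adjoint C * C) (C * adjoint C) := (mul_assoc _ _ _).symm
  rw [(hCpq.cfc_right (isSelfAdjoint_adjoint_mul_self C) (mul_adjoint_nonneg C).isSelfAdjoint
      hv).eq, mul_assoc, cfc_mul v (fun t => t) _ hv.continuousOn,
    cfc_id' ℝ (C * adjoint C) (mul_adjoint_nonneg C).isSelfAdjoint]

variable {C} {a b : ℝ → ℝ} (ha : Continuous a) (hb : Continuous b) (hb0 : ∀ t, 0 ≤ b t)
  (hab : ∀ t, 0 ≤ t → t ≤ (a t * b t) ^ 2)
include ha hb hb0 hab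

lemma norm_cfc_inv_add_apply_adjoint_le {ε : ℝ} (hε : 0 < ε) (y : H) :
    ‖cfc (fun t => (b t + ε)⁻¹) (adjoint C * C) (adjoint C y)‖ ≤ ‖cfc a (C * adjoint C) y‖ := by
  set k := cfc (fun t => (b t + ε)⁻¹) (adjoint C * C)
  have hbε : ∀ t, 0 < b t + ε := fun t => by linarith [hb0 t]
  have hkc : Continuous (fun t => (b t + ε)⁻¹) :=
    (hb.add continuous_const).inv₀ fun t => (hbε t).ne'
  have hk : adjoint k = k := (cfc_predicate _ _ : IsSelfAdjoint k).adjoint_eq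
  refine norm_apply_le_of_adjoint_mul_self_le (T := k * adjoint C) ?_ y
  have hq0 : ∀ t ∈ spectrum ℝ (C * adjoint C), 0 ≤ t := fun t ht =>
    spectrum_nonneg_of_nonneg (mul_adjoint_nonneg C) ht
  calc adjoint (k * adjoint C) * (k * adjoint C)
      = C * cfc (fun t => (b t + ε)⁻¹ ^ 2) (adjoint C * C) * adjoint C := by
        rw [cfc_pow _ 2 _ hkc.continuousOn (isSelfAdjoint_adjoint_mul_self C),
          ← star_eq_adjoint, star_mul, star_eq_adjoint,
          star_eq_adjoint, adjoint_adjoint, hk, sq, mul_assoc, mul_assoc, mul_assoc]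
    _ = cfc (fun t => (b t + ε)⁻¹ ^ 2 * t) (C * adjoint C) :=
        mul_cfc_adjoint_mul_self_mul_adjoint C (hkc.pow 2)
    _ ≤ cfc (fun t => a t ^ 2) (C * adjoint C) := by
        refine cfc_mono (fun t ht => ?_) ((hkc.pow 2).mul continuous_id).continuousOn
          (ha.pow 2).continuousOn
        rw [inv_pow, inv_mul_eq_div, div_le_iff₀ (pow_pos (hbε t) 2)]
        calc t ≤ (a t * b t) ^ 2 := hab t (hq0 t ht)
          _ ≤ a t ^ 2 * (b t + ε) ^ 2 := by
              rw [mul_pow]; gcongr; exacts [hb0 t, le_add_of_nonneg_right hε.le]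
    _ = adjoint (cfc a (C * adjoint C)) * cfc a (C * adjoint C) := by
        rw [cfc_pow _ 2 _ ha.continuousOn (mul_adjoint_nonneg C).isSelfAdjoint,
          (cfc_predicate a _ : IsSelfAdjoint _).adjoint_eq, sq]

lemma norm_inner_le_add_mul_of_le_sq (x y : H) {ε : ℝ} (hε : 0 < ε) :
    ‖⟪C x, y⟫_ℂ‖ ≤ (‖cfc b (adjoint C * C) x‖ + ε * ‖x‖) * ‖cfc a (C * adjoint C) y‖ := by
  have hbε : Continuous (fun t => b t + ε) := hb.add continuous_const
  have hbε_ne : ∀ t, b t + ε ≠ 0 := fun t => by linarith [hb0 t]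
  set h := cfc (fun t => b t + ε) (adjoint C * C) with h_def
  set k := cfc (fun t => (b t + ε)⁻¹) (adjoint C * C)
  have hk : adjoint k = k := (cfc_predicate _ _ : IsSelfAdjoint k).adjoint_eq
  have hkhx : k (h x) = x := by
    rw [← mul_apply_eq_comp, ← cfc_mul (fun t => (b t + ε)⁻¹) (fun t => b t + ε) _
        (hbε.inv₀ hbε_ne).continuousOn hbε.continuousOn,
      cfc_congr (g := 1) fun t _ => inv_mul_cancel₀ (hbε_ne t),
      cfc_one ℝ _ (isSelfAdjoint_adjoint_mul_self C), one_apply_eq_self]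
  have hhx : ‖h x‖ ≤ ‖cfc b (adjoint C * C) x‖ + ε * ‖x‖ := by
    rw [h_def, cfc_add_const ε b _ hb.continuousOn (isSelfAdjoint_adjoint_mul_self C), add_apply,
      Algebra.algebraMap_eq_smul_one, smul_apply, one_apply_eq_self]
    exact (norm_add_le _ _).trans_eq (by rw [norm_smul, Real.norm_of_nonneg hε.le])
  calc ‖⟪C x, y⟫_ℂ‖ = ‖⟪h x, k (adjoint C y)⟫_ℂ‖ := by
        rw [← hk, adjoint_inner_right, adjoint_inner_right, hkhx]
    _ ≤ ‖h x‖ * ‖k (adjoint C y)‖ := norm_inner_le_norm _ _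
    _ ≤ (‖cfc b (adjoint C * C) x‖ + ε * ‖x‖) * ‖cfc a (C * adjoint C) y‖ := by
        gcongr; exact norm_cfc_inv_add_apply_adjoint_le ha hb hb0 hab hε y

lemma norm_inner_le_of_le_sq (x y : H) :
    ‖⟪C x, y⟫_ℂ‖ ≤ ‖cfc b (adjoint C * C) x‖ * ‖cfc a (C * adjoint C) y‖ := by
  set X := ‖cfc b (adjoint C * C) x‖
  set Y := ‖cfc a (C * adjoint C) y‖
  have hlim : Filter.Tendsto (fun ε => (X + ε * ‖x‖) * Y) (nhdsWithin 0 (Set.Ioi 0))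
      (nhds (X * Y)) :=
    tendsto_nhdsWithin_of_tendsto_nhds (Continuous.tendsto' (by fun_prop) 0 _ (by simp))
  exact ge_of_tendsto hlim (eventually_nhdsWithin_of_forall fun ε hε =>
    norm_inner_le_add_mul_of_le_sq ha hb hb0 hab x y hε)

end MixedSchwarz

lemma oabs_eq_abs (C : H →L[ℂ] H) : oabs C = CFC.abs C := by
  rw [oabs, CFC.abs, CFC.sqrt_eq_real_sqrt _ (star_mul_self_nonneg C), cfcₙ_eq_cfc,
    star_eq_adjoint]

lemma norm_cfc_oabs_le {w : ℝ → ℝ} (hw0 : ∀ x, 0 ≤ x → 0 ≤ w x)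
    (hwm : MonotoneOn w (Set.Ici 0)) {C : H →L[ℂ] H} {r : ℝ} (hC : ‖C‖ ≤ r) :
    ‖cfc w (oabs C)‖ ≤ w r :=
  (oabs_eq_abs C ▸ norm_cfc_abs_le hw0 hwm C).trans
    (hwm (norm_nonneg C) ((norm_nonneg C).trans hC) hC)

theorem norm_inner_le_cfc_oabs (C : H →L[ℂ] H) {f g : ℝ → ℝ} (hf : Continuous f)
    (hg : Continuous g) (hg0 : ∀ x, 0 ≤ x → 0 ≤ g x) (hfg : ∀ x, 0 ≤ x → f x * g x = x)
    (x y : H) : ‖⟪C x, y⟫_ℂ‖ ≤ ‖cfc g (oabs C) x‖ * ‖cfc f (oabs (adjoint C)) y‖ := by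
  rw [oabs, oabs, adjoint_adjoint,
    ← cfc_comp g Real.sqrt _ (isSelfAdjoint_adjoint_mul_self C) hg.continuousOn,
    ← cfc_comp f Real.sqrt _ (mul_adjoint_nonneg C).isSelfAdjoint hf.continuousOn]
  refine norm_inner_le_of_le_sq (hf.comp Real.continuous_sqrt) (hg.comp Real.continuous_sqrt)
    (fun t => hg0 _ (Real.sqrt_nonneg t)) (fun t ht => ?_) x y
  rw [Function.comp_apply, Function.comp_apply, hfg _ (Real.sqrt_nonneg t), Real.sq_sqrt ht]

theorem stmt_16 (A B : H →L[ℂ] H) (f g : ℝ → ℝ)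
    (hf : Continuous f) (hg : Continuous g)
    (hf0 : ∀ x, 0 ≤ x → 0 ≤ f x) (hg0 : ∀ x, 0 ≤ x → 0 ≤ g x)
    (hfm : MonotoneOn f (Set.Ici 0)) (hgm : MonotoneOn g (Set.Ici 0))
    (hfg : ∀ x, 0 ≤ x → f x * g x = x) :
    ‖A + B‖ ≤ max ‖A‖ ‖B‖
      + (1 / 2) * (‖cfc f (oabs B) * cfc g (oabs A)‖
          + ‖cfc f (oabs (adjoint A)) * cfc g (oabs (adjoint B))‖) := by
  set m := max ‖A‖ ‖B‖
  have hAm : ‖A‖ ≤ m := le_max_left _ _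
  have hBm : ‖B‖ ≤ m := le_max_right _ _
  rcases ((norm_nonneg A).trans hAm).eq_or_lt with hm | hm
  · rw [norm_le_zero_iff.mp (hAm.trans hm.ge), norm_le_zero_iff.mp (hBm.trans hm.ge), add_zero,
      norm_zero]
    positivity
  have hfgm : f m * g m = m := hfg m hm.le
  have hfm0 : 0 < f m := pos_of_mul_pos_left (hm.trans_eq hfgm.symm) (hg0 m hm.le)
  have hgm0 : 0 < g m := pos_of_mul_pos_right (hm.trans_eq hfgm.symm) (hf0 m hm.le)
  have hA'm : ‖adjoint A‖ ≤ m := (LinearIsometryEquiv.norm_map _ _).trans_le hAm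
  have hB'm : ‖adjoint B‖ ≤ m := (LinearIsometryEquiv.norm_map _ _).trans_le hBm
  calc ‖A + B‖ ≤ f m * g m + (‖cfc f (oabs B) * cfc g (oabs A)‖
        + ‖cfc f (oabs (adjoint A)) * cfc g (oabs (adjoint B))‖) / 2 :=
      norm_add_le_of_norm_inner_le hfm0 hgm0 (cfc_predicate _ _) (cfc_predicate _ _)
        (norm_cfc_oabs_le hg0 hgm hAm) (norm_cfc_oabs_le hg0 hgm hB'm)
        (norm_cfc_oabs_le hf0 hfm hBm) (norm_cfc_oabs_le hf0 hfm hA'm)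
        (norm_inner_le_cfc_oabs A hf hg hg0 hfg)
        (norm_inner_le_cfc_oabs B hg hf hf0 fun x hx => mul_comm (g x) (f x) ▸ hfg x hx)
    _ = _ := by rw [hfgm]; ring
end
end

section
/- Let A be a bounded linear operator on a complex Hilbert space, x, y vectors, and f, g non-negative continuous functions on [0,∞) with f(t)g(t) = t for t ≥ 0. Then |⟨Ax, y⟩|² ≤ ⟨f²(|A|)x, x⟩ · ⟨g²(|A*|)y, y⟩. -/
noncomputable section
open ContinuousLinearMap

variable {H : Type*} [NormedAddCommGroup H] [InnerProductSpace ℂ H] [CompleteSpace H]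

/-! With `T = A*A` and `S = AA*`, the relation `A T = S A` passes from polynomials to every
continuous function, so `A = v(S) A u(T)` whenever `v u = 1` on the spectrum of `S`. Then
`⟨Ax, y⟩ = ⟨A u(T) x, v(S) y⟩`, and Cauchy–Schwarz gives
`|⟨Ax, y⟩|² ≤ ⟨u(T) T u(T) x, x⟩ ⟨v(S)² y, y⟩`. Taking `v = max(|g ∘ √|, ε)` and `u = 1 / v`,
the first factor is at most `⟨f²(|A|) x, x⟩` because `√t = f(√t) g(√t)`, and the second at most
`⟨g²(|A*|) y, y⟩ + ε² ‖y‖²`; let `ε → 0`. -/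

open Polynomial Filter Topology Set

theorem SemiconjBy.aeval {R 𝒜 : Type*} [CommSemiring R] [Semiring 𝒜] [Algebra R 𝒜] {a b c : 𝒜}
    (h : SemiconjBy a b c) (p : R[X]) : SemiconjBy a (aeval b p) (aeval c p) := by
  induction p using Polynomial.induction_on' with
  | add p q hp hq => simpa only [map_add] using hp.add_right hq
  | monomial n r =>
    simpa only [aeval_monomial, Algebra.algebraMap_eq_smul_one, smul_mul_assoc, one_mul]
      using (h.pow_right n).smul_right r

theorem exists_seq_polynomial_tendstoUniformlyOn {f : ℝ → ℝ} (hf : Continuous f) (a b : ℝ) :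
    ∃ p : ℕ → ℝ[X], TendstoUniformlyOn (fun n => (p n).eval) f atTop (Icc a b) := by
  choose p hp using fun n : ℕ => exists_polynomial_near_of_continuousOn a b f hf.continuousOn
    (1 / (n + 1)) Nat.one_div_pos_of_nat
  refine ⟨p, Metric.tendstoUniformlyOn_iff.2 fun ε hε => ?_⟩
  obtain ⟨N, hN⟩ := exists_nat_one_div_lt hε
  filter_upwards [eventually_ge_atTop N] with n hn t ht
  rw [Real.dist_eq, abs_sub_comm]
  exact (hp n t ht).trans_le ((Nat.one_div_le_one_div hn).trans hN.le)

theorem SemiconjBy.cfc_real {𝒜 : Type*} [CStarAlgebra 𝒜] {a b c : 𝒜} (h : SemiconjBy a b c)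
    (hb : IsSelfAdjoint b) (hc : IsSelfAdjoint c) {f : ℝ → ℝ} (hf : Continuous f) :
    SemiconjBy a (cfc f b) (cfc f c) := by
  obtain ⟨r, hr⟩ := ((spectrum.isCompact (𝕜 := ℝ) b).union
    (spectrum.isCompact (𝕜 := ℝ) c)).isBounded.subset_closedBall 0
  rw [Real.closedBall_eq_Icc, zero_sub, zero_add] at hr
  obtain ⟨p, hp⟩ := exists_seq_polynomial_tendstoUniformlyOn hf (-r) r
  have hpoly : ∀ n, a * cfc (p n).eval b = cfc (p n).eval c * a := fun n => by
    rw [cfc_polynomial .., cfc_polynomial ..]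
    exact h.aeval (p n)
  have hlim : ∀ d : 𝒜, spectrum ℝ d ⊆ Icc (-r) r →
      Tendsto (fun n => cfc (p n).eval d) atTop (𝓝 (cfc f d)) := fun d hd =>
    tendsto_cfc_fun (hp.mono hd) (.of_forall fun n => (p n).continuousOn)
  refine tendsto_nhds_unique ((hlim b (subset_union_left.trans hr)).const_mul a) ?_
  simpa only [hpoly] using (hlim c (subset_union_right.trans hr)).mul_const a

section
variable {E : Type*} [NormedAddCommGroup E] [InnerProductSpace ℂ E]

theorem ContinuousLinearMap.re_inner_le_re_inner_of_le {S T : E →L[ℂ] E} (h : S ≤ T) (x : E) :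
    (inner ℂ (S x) x).re ≤ (inner ℂ (T x) x).re := by
  have := ((le_def S T).1 h).re_inner_nonneg_left x
  rwa [sub_apply, inner_sub_left, map_sub, sub_nonneg] at this

variable [CompleteSpace E]

theorem re_inner_cfc_nonneg {a : E →L[ℂ] E} {φ : ℝ → ℝ} (hφ : ∀ t ∈ spectrum ℝ a, 0 ≤ φ t)
    (x : E) : 0 ≤ (inner ℂ (cfc φ a x) x).re :=
  ((nonneg_iff_isPositive _).1 (cfc_nonneg hφ)).re_inner_nonneg_left x

theorem inner_cfc_apply_cfc_apply {a : E →L[ℂ] E} {φ ψ : ℝ → ℝ}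
    (hφ : ContinuousOn φ (spectrum ℝ a)) (hψ : ContinuousOn ψ (spectrum ℝ a)) (x y : E) :
    inner ℂ (cfc φ a x) (cfc ψ a y) = inner ℂ (cfc (fun t => ψ t * φ t) a x) y := by
  rw [cfc_mul ψ φ a hψ hφ, mul_apply_eq_comp]
  exact ((cfc_predicate ψ a).isSymmetric _ _).symm

theorem re_inner_cfc_add_const {a : E →L[ℂ] E} (ha : IsSelfAdjoint a) {φ : ℝ → ℝ}
    (hφ : ContinuousOn φ (spectrum ℝ a)) (c : ℝ) (x : E) :
    (inner ℂ (cfc (fun t => φ t + c) a x) x).re = (inner ℂ (cfc φ a x) x).re + c * ‖x‖ ^ 2 := by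
  rw [cfc_add_const c φ a hφ ha, add_apply, Algebra.algebraMap_eq_smul_one, smul_apply,
    one_apply_eq_self, inner_add_left, Complex.add_re, ← Complex.coe_smul, inner_smul_left]
  simp [inner_self_eq_norm_sq_to_K, ← Complex.ofReal_pow]

end

theorem norm_inner_sq_le_of_mul_eq_one (A : H →L[ℂ] H) (x y : H) {u v : ℝ → ℝ}
    (hu : Continuous u) (hv : Continuous v)
    (huv : ∀ t ∈ spectrum ℝ (A * adjoint A), v t * u t = 1) :
    ‖inner ℂ (A x) y‖ ^ 2 ≤
      (inner ℂ (cfc (fun t => u t * (t * u t)) (adjoint A * A) x) x).re *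
        (inner ℂ (cfc (fun t => v t * v t) (A * adjoint A) y) y).re := by
  set T := adjoint A * A
  set S := A * adjoint A
  have hT : IsSelfAdjoint T := (isPositive_adjoint_comp_self A).isSelfAdjoint
  have hS : IsSelfAdjoint S := (isPositive_self_comp_adjoint A).isSelfAdjoint
  have hAuv : cfc v S * (A * cfc u T) = A := by
    rw [(SemiconjBy.cfc_real (mul_assoc A (adjoint A) A).symm hT hS hu).eq, ← mul_assoc,
      ← cfc_mul v u S hv.continuousOn hu.continuousOn, cfc_congr huv, cfc_const_one ℝ S, one_mul]
  have hinner : inner ℂ (A x) y = inner ℂ (A (cfc u T x)) (cfc v S y) :=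
    calc inner ℂ (A x) y = inner ℂ ((cfc v S * (A * cfc u T)) x) y := by rw [hAuv]
      _ = inner ℂ (A (cfc u T x)) (cfc v S y) := (cfc_predicate v S).isSymmetric _ _
  have hTu : T (cfc u T x) = cfc (fun t => t * u t) T x := by
    rw [cfc_mul (fun t => t) u T (continuousOn_id' _) hu.continuousOn, cfc_id' ℝ T]; rfl
  have hleft : ‖A (cfc u T x)‖ ^ 2 = (inner ℂ (cfc (fun t => u t * (t * u t)) T x) x).re := by
    rw [apply_norm_sq_eq_inner_adjoint_left, ← mul_def, hTu,
      inner_cfc_apply_cfc_apply (by fun_prop) hu.continuousOn, RCLike.re_to_complex]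
  have hright : ‖cfc v S y‖ ^ 2 = (inner ℂ (cfc (fun t => v t * v t) S y) y).re := by
    rw [← inner_cfc_apply_cfc_apply hv.continuousOn hv.continuousOn,
      ← inner_self_eq_norm_sq (𝕜 := ℂ), RCLike.re_to_complex]
  rw [hinner, ← hleft, ← hright, ← mul_pow]
  gcongr
  exact norm_inner_le_norm _ _

theorem cfc_oabs (A : H →L[ℂ] H) {φ : ℝ → ℝ} (hφ : Continuous φ) :
    cfc φ (oabs A) = cfc (fun t => φ (√t)) (adjoint A * A) := by
  rw [oabs, ← cfc_comp φ Real.sqrt (adjoint A * A) (isPositive_adjoint_comp_self A).isSelfAdjoint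
    hφ.continuousOn]
  rfl

theorem sq_div_le_sq_of_mul_eq {a b s m : ℝ} (hab : a * b = s) (hs : 0 ≤ s) (hbm : |b| ≤ m)
    (hm : 0 < m) : (s / m) ^ 2 ≤ a ^ 2 := by
  have hsm : s ≤ |a| * m :=
    calc s = a * b := hab.symm
      _ ≤ |a| * |b| := (le_abs_self _).trans (abs_mul a b).le
      _ ≤ |a| * m := by gcongr
  rw [← sq_abs a]
  gcongr
  rwa [div_le_iff₀ hm]

theorem norm_inner_sq_le_add_sq (A : H →L[ℂ] H) (x y : H) {f g : ℝ → ℝ}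
    (hf : Continuous f) (hg : Continuous g) (hfg : ∀ t, 0 ≤ t → f t * g t = t)
    {ε : ℝ} (hε : 0 < ε) :
    ‖inner ℂ (A x) y‖ ^ 2 ≤
      (inner ℂ (cfc (fun t => f (√t) ^ 2) (adjoint A * A) x) x).re *
        ((inner ℂ (cfc (fun t => g (√t) ^ 2) (A * adjoint A) y) y).re + ε ^ 2 * ‖y‖ ^ 2) := by
  set m : ℝ → ℝ := fun t => max |g (√t)| ε
  have hm : ∀ t, 0 < m t := fun t => lt_max_of_lt_right hε
  have hm_cont : Continuous m := by fun_prop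
  have hu_cont : Continuous fun t => (m t)⁻¹ := hm_cont.inv₀ fun t => (hm t).ne'
  have hkey := norm_inner_sq_le_of_mul_eq_one A x y hu_cont hm_cont
    fun t _ => mul_inv_cancel₀ (hm t).ne'
  have hT : 0 ≤ adjoint A * A := (nonneg_iff_isPositive _).2 (isPositive_adjoint_comp_self A)
  have hS : IsSelfAdjoint (A * adjoint A) := (isPositive_self_comp_adjoint A).isSelfAdjoint
  have hleft : cfc (fun t => (m t)⁻¹ * (t * (m t)⁻¹)) (adjoint A * A) ≤
      cfc (fun t => f (√t) ^ 2) (adjoint A * A) := by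
    refine cfc_mono (fun t ht => ?_) (by fun_prop) (by fun_prop)
    have ht0 : 0 ≤ t := spectrum_nonneg_of_nonneg hT ht
    calc (m t)⁻¹ * (t * (m t)⁻¹) = (√t / m t) ^ 2 := by
          rw [div_pow, Real.sq_sqrt ht0]; ring
      _ ≤ f (√t) ^ 2 := sq_div_le_sq_of_mul_eq (hfg _ (Real.sqrt_nonneg t)) (Real.sqrt_nonneg t)
          (le_max_left _ _) (hm t)
  have hright : cfc (fun t => m t * m t) (A * adjoint A) ≤
      cfc (fun t => g (√t) ^ 2 + ε ^ 2) (A * adjoint A) := by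
    refine cfc_mono (fun t _ => ?_) (by fun_prop) (by fun_prop)
    rcases max_choice |g (√t)| ε with h | h <;> simp only [m, h] <;> nlinarith [sq_abs (g √t)]
  refine hkey.trans (mul_le_mul (re_inner_le_re_inner_of_le hleft x) ?_
    (re_inner_cfc_nonneg (fun t _ => mul_self_nonneg (m t)) y)
    (re_inner_cfc_nonneg (fun t _ => sq_nonneg (f √t)) x))
  rw [← re_inner_cfc_add_const hS (by fun_prop)]
  exact re_inner_le_re_inner_of_le hright y

theorem stmt_17_general (A : H →L[ℂ] H) (x y : H) (f g : ℝ → ℝ)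
    (hf : Continuous f) (hg : Continuous g)
    (hfg : ∀ t, 0 ≤ t → f t * g t = t) :
    ‖(inner ℂ (A x) y : ℂ)‖ ^ 2 ≤
      (inner ℂ ((cfc (fun t => f t ^ 2) (oabs A)) x) x : ℂ).re
        * (inner ℂ ((cfc (fun t => g t ^ 2) (oabs (adjoint A))) y) y : ℂ).re := by
  rw [cfc_oabs A (by fun_prop), cfc_oabs (adjoint A) (by fun_prop), adjoint_adjoint]
  set P := (inner ℂ (cfc (fun t => f (√t) ^ 2) (adjoint A * A) x) x).re
  set Q := (inner ℂ (cfc (fun t => g (√t) ^ 2) (A * adjoint A) y) y).re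
  have hlim : Tendsto (fun ε : ℝ => P * (Q + ε ^ 2 * ‖y‖ ^ 2)) (𝓝[>] 0) (𝓝 (P * Q)) := by
    have hcont : Continuous fun ε : ℝ => P * (Q + ε ^ 2 * ‖y‖ ^ 2) := by fun_prop
    simpa using (hcont.tendsto 0).mono_left nhdsWithin_le_nhds
  exact ge_of_tendsto hlim (eventually_nhdsWithin_of_forall fun ε hε =>
    norm_inner_sq_le_add_sq A x y hf hg hfg hε)

theorem stmt_17 (A : H →L[ℂ] H) (x y : H) (f g : ℝ → ℝ)
    (hf : Continuous f) (hg : Continuous g)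
    (hf0 : ∀ t, 0 ≤ t → 0 ≤ f t) (hg0 : ∀ t, 0 ≤ t → 0 ≤ g t)
    (hfg : ∀ t, 0 ≤ t → f t * g t = t) :
    ‖(inner ℂ (A x) y : ℂ)‖ ^ 2 ≤
      (inner ℂ ((cfc (fun t => f t ^ 2) (oabs A)) x) x : ℂ).re
        * (inner ℂ ((cfc (fun t => g t ^ 2) (oabs (adjoint A))) y) y : ℂ).re :=
  stmt_17_general A x y f g hf hg hfg
end
end
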